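/- Let m be an integer, p a prime, and (U_e) the generalized Fibonacci sequence with parameter m. Suppose e ≥ 1 is the least positive integer (the entry point) such that p divides U_e. Then for every k ≥ 1: T_{2k}(m)^e ≡ (-1)^{(k+1)e}·U_{e-1}·I_{2k} (mod p), and for every k ≥ 0: T_{2k+1}(m)^e ≡ (-1)^{ke}·I_{2k+1} (mod p). -/

import Mathlib

/-- The generalized Fibonacci sequence with parameter `m`:
`U_0 = 0`, `U_1 = 1`, `U_{e+1} = m U_e + U_{e-1}`. -/
def genFibU {R : Type*} [CommRing R] (m : R) : ℕ → R
  | 0 => 0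
  | 1 => 1
  | e + 2 => m * genFibU m (e + 1) + genFibU m e

/-- The `n × n` generalized Fibonacci matrix `T_n(m)`, with 1-based `(i,j)` entry
`m^{i+j-n-1} C(i-1, n-j)` when `i + j ≥ n + 1` and `0` otherwise. -/
def genFibMatrix {R : Type*} [CommRing R] (m : R) (n : ℕ) :
    Matrix (Fin n) (Fin n) R :=
  Matrix.of fun i j =>
    if n ≤ i.val + j.val + 1 then
      m ^ (i.val + j.val + 1 - n) * (Nat.choose i.val (n - 1 - j.val) : R)
    else 0


open MvPolynomial Finset

noncomputable section AuxSym

variable {R : Type*} [CommRing R]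

/-- The substitution endomorphism of `R[X₀,X₁]` attached to a `2×2` matrix. -/
def linSub (M : Matrix (Fin 2) (Fin 2) R) :
    MvPolynomial (Fin 2) R →ₐ[R] MvPolynomial (Fin 2) R :=
  aeval fun i => M i 0 • X 0 + M i 1 • X 1

lemma linSub_X (M : Matrix (Fin 2) (Fin 2) R) (i : Fin 2) :
    linSub M (X i) = M i 0 • X 0 + M i 1 • X 1 := by
  simp [linSub]

lemma linSub_comp (M N : Matrix (Fin 2) (Fin 2) R) (P : MvPolynomial (Fin 2) R) :
    linSub M (linSub N P) = linSub (N * M) P := by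
  have h : (linSub M).comp (linSub N) = linSub (N * M) := by
    apply MvPolynomial.algHom_ext
    intro i
    simp only [AlgHom.coe_comp, Function.comp_apply, linSub_X, map_add, map_smul,
      Matrix.mul_apply, Fin.sum_univ_two, smul_eq_C_mul, map_mul, algHom_C, MvPolynomial.algebraMap_eq]
    ring
  exact AlgHom.congr_fun h P


/-- The monomial basis of homogeneous degree-`d` polynomials in two variables. -/
def monoB (d : ℕ) (j : Fin (d+1)) : MvPolynomial (Fin 2) R :=
  X 0 ^ (j : ℕ) * X 1 ^ (d - (j : ℕ))

def fsB (d : ℕ) (j : Fin (d+1)) : Fin 2 →₀ ℕ :=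
  Finsupp.single 0 (j : ℕ) + Finsupp.single 1 (d - (j : ℕ))

lemma monoB_eq (d : ℕ) (j : Fin (d+1)) :
    (monoB d j : MvPolynomial (Fin 2) R) = monomial (fsB d j) 1 := by
  simp [monoB, fsB, X_pow_eq_monomial, monomial_mul]

lemma coeff_monoB (d : ℕ) (j l : Fin (d+1)) :
    coeff (fsB d j) (monoB (R := R) d l) = if l = j then 1 else 0 := by
  rw [monoB_eq, coeff_monomial]
  by_cases h : l = j
  · simp [h]
  · rw [if_neg h, if_neg]
    intro hf
    apply h
    have := DFunLike.congr_fun hf (0 : Fin 2)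
    simp [fsB, Finsupp.single_apply] at this
    exact Fin.ext this

/-- `B` is the matrix of the action of `M` on degree-`d` homogeneous polynomials. -/
def ActsAs (d : ℕ) (M : Matrix (Fin 2) (Fin 2) R)
    (B : Matrix (Fin (d+1)) (Fin (d+1)) R) : Prop :=
  ∀ i, linSub M (monoB d i) = ∑ j, B i j • monoB d j

lemma ActsAs.mul {d : ℕ} {M N : Matrix (Fin 2) (Fin 2) R}
    {B C : Matrix (Fin (d+1)) (Fin (d+1)) R}
    (hM : ActsAs d M B) (hN : ActsAs d N C) : ActsAs d (N * M) (C * B) := by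
  intro i
  rw [← linSub_comp, hN i, map_sum]
  have hM' : ∀ x, linSub M (monoB d x) = ∑ j, B x j • monoB (R := R) d j := hM
  simp only [map_smul, hM', Finset.smul_sum, smul_smul, Matrix.mul_apply,
    Finset.sum_smul]
  rw [Finset.sum_comm]

lemma ActsAs.one (d : ℕ) : ActsAs d (1 : Matrix (Fin 2) (Fin 2) R) 1 := by
  intro i
  have h1 : linSub (1 : Matrix (Fin 2) (Fin 2) R) = AlgHom.id R _ := by
    apply MvPolynomial.algHom_ext
    intro t
    fin_cases t <;> simp [linSub_X, Matrix.one_apply]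
  rw [h1]
  simp [Matrix.one_apply, ite_smul, Finset.sum_ite_eq]

lemma ActsAs.pow {d : ℕ} {M : Matrix (Fin 2) (Fin 2) R}
    {B : Matrix (Fin (d+1)) (Fin (d+1)) R}
    (hM : ActsAs d M B) : ∀ e : ℕ, ActsAs d (M ^ e) (B ^ e) := by
  intro e
  induction e with
  | zero => simpa using ActsAs.one d
  | succ e ih =>
      rw [pow_succ, pow_succ]
      exact ActsAs.mul hM ih

lemma ActsAs.unique {d : ℕ} {M : Matrix (Fin 2) (Fin 2) R}
    {B B' : Matrix (Fin (d+1)) (Fin (d+1)) R}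
    (h : ActsAs d M B) (h' : ActsAs d M B') : B = B' := by
  ext i j
  have hc := (h i).symm.trans (h' i)
  have := congrArg (coeff (fsB d j)) hc
  simpa [coeff_sum, coeff_smul, coeff_monoB, mul_ite, Finset.sum_ite_eq] using this

lemma actsAs_scalar (d : ℕ) (c : R) :
    ActsAs d (c • (1 : Matrix (Fin 2) (Fin 2) R)) ((c ^ d) • 1) := by
  intro i
  have hX : ∀ t : Fin 2, linSub (c • (1 : Matrix (Fin 2) (Fin 2) R)) (X t) = c • X t := by
    intro t
    fin_cases t <;> simp [linSub_X, Matrix.smul_apply, Matrix.one_apply]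
  have hd : (i : ℕ) + (d - (i : ℕ)) = d := by
    have := i.isLt; omega
  calc linSub (c • (1 : Matrix (Fin 2) (Fin 2) R)) (monoB d i)
      = (c • X 0 : MvPolynomial (Fin 2) R) ^ (i : ℕ) * (c • X 1) ^ (d - (i : ℕ)) := by
        simp [monoB, map_mul, map_pow, hX]
    _ = (c ^ d) • monoB d i := by
        rw [smul_pow, smul_pow, monoB]
        rw [smul_mul_smul_comm, ← pow_add, hd]
    _ = ∑ j, ((c ^ d) • (1 : Matrix (Fin (d+1)) (Fin (d+1)) R)) i j • monoB d j := by
        simp [Matrix.smul_apply, Matrix.one_apply, ite_smul, Finset.sum_ite_eq]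


lemma actsAs_genFib (m : R) (d : ℕ) :
    ActsAs d !![m, 1; 1, 0] (genFibMatrix m (d+1)) := by
  intro i
  have hi : (i : ℕ) ≤ d := Nat.lt_succ_iff.mp i.isLt
  have hX0 : linSub !![m, (1:R); 1, 0] (X 0) = m • X 0 + X 1 := by
    simp [linSub_X]
  have hX1 : linSub !![m, (1:R); 1, 0] (X 1) = X 0 := by
    simp [linSub_X]
  have hLHS : linSub !![m, (1:R); 1, 0] (monoB d i)
      = ∑ k ∈ range ((i:ℕ)+1),
          (m ^ k * (Nat.choose (i:ℕ) k : R)) • ((X 0 : MvPolynomial (Fin 2) R) ^ (d - (i:ℕ) + k) * X 1 ^ ((i:ℕ) - k)) := by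
    rw [monoB, map_mul, map_pow, map_pow, hX0, hX1, add_pow, Finset.sum_mul]
    apply Finset.sum_congr rfl
    intro k hk
    simp only [smul_pow, smul_eq_C_mul, map_mul, map_pow, map_natCast]
    ring
  have hsum : (∑ j, genFibMatrix m (d+1) i j • monoB (R := R) d j)
      = ∑ t ∈ range (d+1), (if d + 1 ≤ (i:ℕ) + t + 1 then
          m ^ ((i:ℕ) + t + 1 - (d+1)) * (Nat.choose (i:ℕ) (d + 1 - 1 - t) : R) else 0) •
          ((X 0 : MvPolynomial (Fin 2) R) ^ t * X 1 ^ (d - t)) := by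
    simp only [genFibMatrix, Matrix.of_apply, monoB]
    exact Fin.sum_univ_eq_sum_range (fun t => (if d + 1 ≤ (i:ℕ) + t + 1 then
          m ^ ((i:ℕ) + t + 1 - (d+1)) * (Nat.choose (i:ℕ) (d + 1 - 1 - t) : R) else 0) •
          ((X 0 : MvPolynomial (Fin 2) R) ^ t * X 1 ^ (d - t))) (d+1)
  have hsub : Finset.Ico (d - (i:ℕ)) (d+1) ⊆ range (d+1) := by
    intro x hx
    simp only [Finset.mem_Ico, Finset.mem_range] at *
    omega
  have hvan : ∀ x ∈ range (d+1), x ∉ Finset.Ico (d - (i:ℕ)) (d+1) →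
      ((if d + 1 ≤ (i:ℕ) + x + 1 then
          m ^ ((i:ℕ) + x + 1 - (d+1)) * (Nat.choose (i:ℕ) (d + 1 - 1 - x) : R) else 0) •
          ((X 0 : MvPolynomial (Fin 2) R) ^ x * X 1 ^ (d - x))) = 0 := by
    intro x hx hx'
    simp only [Finset.mem_Ico, Finset.mem_range] at *
    rw [if_neg (by omega), zero_smul]
  have hRHS : (∑ j, genFibMatrix m (d+1) i j • monoB (R := R) d j)
      = ∑ k ∈ range ((i:ℕ)+1),
          (m ^ k * (Nat.choose (i:ℕ) k : R)) • ((X 0 : MvPolynomial (Fin 2) R) ^ (d - (i:ℕ) + k) * X 1 ^ ((i:ℕ) - k)) := by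
    rw [hsum, ← Finset.sum_subset hsub hvan, Finset.sum_Ico_eq_sum_range,
      show d + 1 - (d - (i:ℕ)) = (i:ℕ) + 1 by omega]
    apply Finset.sum_congr rfl
    intro k hk
    simp only [Finset.mem_range] at hk
    have hki : k ≤ (i:ℕ) := by omega
    rw [if_pos (by omega : d + 1 ≤ (i:ℕ) + (d - (i:ℕ) + k) + 1),
      show (i:ℕ) + (d - (i:ℕ) + k) + 1 - (d+1) = k by omega,
      show d + 1 - 1 - (d - (i:ℕ) + k) = (i:ℕ) - k by omega,
      show d - (d - (i:ℕ) + k) = (i:ℕ) - k by omega,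
      Nat.choose_symm hki]
  rw [hLHS, hRHS]

end AuxSym

section IntPart

lemma fibMat_pow (m : ℤ) : ∀ e : ℕ,
    (!![m, 1; 1, 0] : Matrix (Fin 2) (Fin 2) ℤ) ^ (e+1) =
      !![genFibU m (e+2), genFibU m (e+1); genFibU m (e+1), genFibU m e]
  | 0 => by
      ext i j
      fin_cases i <;> fin_cases j <;> simp [genFibU]
  | (e+1) => by
      rw [pow_succ, fibMat_pow m e]
      ext i j
      fin_cases i <;> fin_cases j <;>
        simp [Matrix.mul_apply, Fin.sum_univ_two, genFibU] <;> ring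

lemma cassini (m : ℤ) (e : ℕ) :
    genFibU m (e+2) * genFibU m e - genFibU m (e+1) * genFibU m (e+1) = (-1)^(e+1) := by
  have h := congrArg Matrix.det (fibMat_pow m e)
  rw [Matrix.det_pow, Matrix.det_fin_two_of, Matrix.det_fin_two_of] at h
  have h2 : (m * 0 - 1 * 1 : ℤ) = -1 := by ring
  rw [h2] at h
  linarith

lemma mapPow (p : ℕ) {n : ℕ} (M : Matrix (Fin n) (Fin n) ℤ) (k : ℕ) :
    (M ^ k).map (Int.cast : ℤ → ZMod p) = (M.map (Int.cast : ℤ → ZMod p)) ^ k := by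
  have := map_pow ((Int.castRingHom (ZMod p)).mapMatrix) M k
  simpa [RingHom.mapMatrix_apply] using this

lemma key (m : ℤ) (p : ℕ) (e' : ℕ) (hdvd : (p:ℤ) ∣ genFibU m (e'+1)) (n d : ℕ)
    (hn : n = d+1) :
    ((genFibMatrix m n ^ (e'+1)).map (Int.cast : ℤ → ZMod p)) =
      (((genFibU m e' : ℤ) : ZMod p) ^ d) • 1 := by
  subst hn
  set c : ZMod p := ((genFibU m e' : ℤ) : ZMod p) with hc
  have hUe : ((genFibU m (e'+1) : ℤ) : ZMod p) = 0 :=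
    (ZMod.intCast_zmod_eq_zero_iff_dvd _ p).mpr hdvd
  have hUe2 : ((genFibU m (e'+2) : ℤ) : ZMod p) = c := by
    rw [show genFibU m (e'+2) = m * genFibU m (e'+1) + genFibU m e' from rfl]
    push_cast
    rw [hUe, hc]
    ring
  have hApow : ((!![m,1;1,0] : Matrix (Fin 2) (Fin 2) ℤ).map (Int.cast : ℤ → ZMod p))^(e'+1)
      = c • 1 := by
    rw [← mapPow, fibMat_pow]
    ext i j
    fin_cases i <;> fin_cases j <;>
      simp [Matrix.map_apply, Matrix.smul_apply, Matrix.one_apply, hUe, hUe2, hc]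
  have hB : (genFibMatrix m (d+1)).map (Int.cast : ℤ → ZMod p)
      = genFibMatrix ((m : ZMod p)) (d+1) := by
    ext i j
    simp only [genFibMatrix, Matrix.map_apply, Matrix.of_apply]
    split <;> push_cast <;> ring
  have hAmap : (!![m,1;1,0] : Matrix (Fin 2) (Fin 2) ℤ).map (Int.cast : ℤ → ZMod p)
      = !![((m : ZMod p)), 1; 1, 0] := by
    ext i j
    fin_cases i <;> fin_cases j <;> simp [Matrix.map_apply]
  have h1 : ActsAs d (!![((m : ZMod p)),1;1,0]) (genFibMatrix ((m : ZMod p)) (d+1)) :=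
    actsAs_genFib _ d
  have h2 := h1.pow (e'+1)
  rw [← hAmap, ← hB, hApow] at h2
  have h3 := actsAs_scalar d c
  have h4 := ActsAs.unique h2 h3
  rw [mapPow]
  exact h4

end IntPart

lemma genFibU_cast (m : ℤ) (p : ℕ) : ∀ e : ℕ,
    ((genFibU m e : ℤ) : ZMod p) = genFibU ((m : ZMod p)) e
  | 0 => by simp [genFibU]
  | 1 => by simp [genFibU]
  | (e+2) => by
      rw [show genFibU m (e+2) = m * genFibU m (e+1) + genFibU m e from rfl,
        show genFibU ((m : ZMod p)) (e+2)
          = (m : ZMod p) * genFibU ((m : ZMod p)) (e+1) + genFibU ((m : ZMod p)) e from rfl]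
      push_cast
      rw [genFibU_cast m p (e+1), genFibU_cast m p e]


/-- If `e ≥ 1` is the entry point of the prime `p` in the sequence `U`, then
`T_{2k}(m)^e ≡ (-1)^{(k+1)e} U_{e-1} I (mod p)` and
`T_{2k+1}(m)^e ≡ (-1)^{ke} I (mod p)`. -/
theorem genFibMatrix_pow_entryPoint_parity (m : ℤ) (p : ℕ) (hp : p.Prime)
    (e : ℕ) (he : 1 ≤ e) (hdvd : (p : ℤ) ∣ genFibU m e)
    (hleast : ∀ e' : ℕ, 1 ≤ e' → e' < e → ¬ (p : ℤ) ∣ genFibU m e') :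
    (∀ k : ℕ, 1 ≤ k →
      (((genFibMatrix m (2 * k)) ^ e).map (Int.cast : ℤ → ZMod p)) =
        ((-1 : ZMod p) ^ ((k + 1) * e) * (genFibU m (e - 1) : ZMod p)) •
          (1 : Matrix (Fin (2 * k)) (Fin (2 * k)) (ZMod p))) ∧
    (∀ k : ℕ,
      (((genFibMatrix m (2 * k + 1)) ^ e).map (Int.cast : ℤ → ZMod p)) =
        ((-1 : ZMod p) ^ (k * e)) •
          (1 : Matrix (Fin (2 * k + 1)) (Fin (2 * k + 1)) (ZMod p))) := by
  obtain ⟨e', rfl⟩ : ∃ e', e = e' + 1 := ⟨e - 1, by omega⟩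
  set c : ZMod p := ((genFibU m e' : ℤ) : ZMod p) with hc
  have hUe : ((genFibU m (e'+1) : ℤ) : ZMod p) = 0 :=
    (ZMod.intCast_zmod_eq_zero_iff_dvd _ p).mpr hdvd
  have hUe2 : ((genFibU m (e'+2) : ℤ) : ZMod p) = c := by
    rw [show genFibU m (e'+2) = m * genFibU m (e'+1) + genFibU m e' from rfl]
    push_cast
    rw [hUe, hc]
    ring
  have hc2 : c ^ 2 = (-1 : ZMod p) ^ (e'+1) := by
    have h := congrArg (fun z : ℤ => ((z : ZMod p))) (cassini m e')
    push_cast at h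
    rw [hUe, hUe2, ← hc] at h
    rw [pow_two]
    rw [← h]
    ring
  constructor
  · rintro k hk
    obtain ⟨k', rfl⟩ : ∃ k', k = k' + 1 := ⟨k - 1, by omega⟩
    have hkey := key m p e' hdvd (2*(k'+1)) (2*k'+1) (by ring)
    rw [hkey]
    congr 1
    have h1 : c ^ (2*k'+1) = (c^2)^k' * c := by
      rw [← pow_mul, ← pow_succ]
    rw [show (e'+1-1) = e' from rfl, ← genFibU_cast m p e', ← hc, h1, hc2, ← pow_mul,
      show (k'+1+1)*(e'+1) = (e'+1)*k' + 2*(e'+1) by ring, pow_add,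
      pow_mul (-1 : ZMod p) 2 (e'+1), neg_one_sq, one_pow, mul_one]
  · intro k
    have hkey := key m p e' hdvd (2*k+1) (2*k) rfl
    rw [hkey]
    congr 1
    rw [pow_mul, hc2, ← pow_mul, mul_comm (e'+1) k]
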